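/- arXiv:2605.24141 — 3 statements merged into one kernel-verified Lean document; each statement's English description precedes it below -/
import Mathlib

section
/- Let G be a topological group acting continuously on a compact space X, and let (Y,d) be a metric space with a subset A homotopy dense in Y. Equip C(X,Y) with the G-action (g·f)(x) = f(g⁻¹x). Then C(X,A) is G-homotopy dense in C(X,Y): there is a continuous G-equivariant homotopy K : C(X,Y) × [0,1] → C(X,Y) with K(p,0)=p and K(p,t) ∈ C(X,A) for t > 0. -/
/-! The homotopy is `K (p, t) = x ↦ F (p x, t)`. It is continuous for the compact-open topology
because `(p, t) ↦ (x ↦ (p x, t))` is, and it commutes with the `G`-action because `K` acts on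
`p` by postcomposition while `G` acts by precomposition. -/

open unitInterval

/-- The action of `G` on `C(X,Y)` given by `(g • f)(x) = f (g⁻¹ • x)`. -/
noncomputable def gsmul {G X Y : Type*} [Group G] [TopologicalSpace G] [TopologicalSpace X]
    [MulAction G X] [ContinuousSMul G X] [TopologicalSpace Y] (g : G) (p : C(X, Y)) : C(X, Y) :=
  p.comp ⟨fun x => g⁻¹ • x, continuous_const_smul _⟩

namespace ContinuousMap

variable {X X' Y Z W : Type*} [TopologicalSpace X] [TopologicalSpace X'] [TopologicalSpace Y]
  [TopologicalSpace Z] [TopologicalSpace W]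

def postcompWithParam (F : C(Y × Z, W)) : C(C(X, Y) × Z, C(X, W)) where
  toFun pz := F.comp (pz.1.prodMk (const X pz.2))
  continuous_toFun :=
    (continuous_postcomp (F.comp prodSwap)).comp (continuous_prodMk_const.comp continuous_swap)

@[simp]
theorem postcompWithParam_apply (F : C(Y × Z, W)) (p : C(X, Y)) (z : Z) (x : X) :
    F.postcompWithParam (p, z) x = F (p x, z) :=
  rfl

theorem postcompWithParam_comp (F : C(Y × Z, W)) (p : C(X, Y)) (φ : C(X', X)) (z : Z) :
    F.postcompWithParam (p.comp φ, z) = (F.postcompWithParam (p, z)).comp φ :=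
  rfl

end ContinuousMap

theorem stmt5_general {G X Y : Type*} [Group G] [TopologicalSpace G]
    [TopologicalSpace X] [MulAction G X] [ContinuousSMul G X]
    [MetricSpace Y] (A : Set Y) (F : Y × I → Y) (hF : Continuous F)
    (hF0 : ∀ y, F (y, 0) = y) (hFA : ∀ y (t : I), t ≠ 0 → F (y, t) ∈ A) :
    ∃ K : C(X, Y) × I → C(X, Y), Continuous K ∧
      (∀ p, K (p, 0) = p) ∧ (∀ p (t : I), t ≠ 0 → ∀ x, K (p, t) x ∈ A) ∧
      ∀ (g : G) (p : C(X, Y)) (t : I), K (gsmul g p, t) = gsmul g (K (p, t)) := by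
  let K := (⟨F, hF⟩ : C(Y × I, Y)).postcompWithParam (X := X)
  refine ⟨K, K.continuous, fun p => ?_, fun p t ht x => hFA (p x) t ht, fun g p t => ?_⟩
  · ext x
    rw [ContinuousMap.postcompWithParam_apply]
    exact hF0 (p x)
  · exact ContinuousMap.postcompWithParam_comp _ p _ t

theorem stmt5 {G X Y : Type*} [Group G] [TopologicalSpace G] [IsTopologicalGroup G]
    [TopologicalSpace X] [CompactSpace X] [MulAction G X] [ContinuousSMul G X]
    [MetricSpace Y] (A : Set Y) (F : Y × I → Y) (hF : Continuous F)
    (hF0 : ∀ y, F (y, 0) = y) (hFA : ∀ y (t : I), t ≠ 0 → F (y, t) ∈ A) :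
    ∃ K : C(X, Y) × I → C(X, Y), Continuous K ∧
      (∀ p, K (p, 0) = p) ∧ (∀ p (t : I), t ≠ 0 → ∀ x, K (p, t) x ∈ A) ∧
      ∀ (g : G) (p : C(X, Y)) (t : I), K (gsmul g p, t) = gsmul g (K (p, t)) :=
  stmt5_general A F hF hF0 hFA
end

section
/- Let (S,d,·) be a metric semilattice with d(ab,a'b') ≤ max{d(a,a'),d(b,b')}. Let F(S) denote the set of nonempty finite subsets of S with the Hausdorff metric d_H. Then the map r : F(S) → S defined by r({s_1,…,s_n}) = s_1 · s_2 ⋯ s_n (the product of all elements, well-defined by commutativity and associativity) satisfies d(r(A), r(B)) ≤ d_H(A,B) for all A, B ∈ F(S); in particular r is 1-Lipschitz, continuous, and is a retraction onto S (identifying s with {s}). -/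
/-!
Match every point of `A` and of `B` with a point of the other set at distance at most
`r = d_H(A, B)`; this is possible because finite sets are compact. Taking the supremum of the
first and of the second coordinates over the finite set of matched pairs recovers `sup A` and
`sup B`, and iterating `d(a ⊔ b, a' ⊔ b') ≤ max (d(a, a')) (d(b, b'))` along that set bounds
the distance of the two suprema by `r`.
-/

open Metric

section MetricSemilattice

variable {S : Type*} [MetricSpace S] [SemilatticeSup S]

lemma Finset.dist_sup'_sup'_le {ι : Type*}
    (hd : ∀ a b a' b' : S, dist (a ⊔ b) (a' ⊔ b') ≤ max (dist a a') (dist b b'))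
    {I : Finset ι} (hI : I.Nonempty) {f g : ι → S} {r : ℝ}
    (hr : ∀ i ∈ I, dist (f i) (g i) ≤ r) :
    dist (I.sup' hI f) (I.sup' hI g) ≤ r := by
  induction hI using Finset.Nonempty.cons_induction with
  | singleton i => simpa using hr i (Finset.mem_singleton_self i)
  | cons i s hi hs ih =>
    rw [Finset.sup'_cons hs, Finset.sup'_cons hs]
    exact (hd _ _ _ _).trans <| max_le (hr i (Finset.mem_cons_self i s))
      (ih fun j hj => hr j (Finset.mem_cons_of_mem hj))

lemma Finset.dist_sup'_id_le_of_forall_exists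
    (hd : ∀ a b a' b' : S, dist (a ⊔ b) (a' ⊔ b') ≤ max (dist a a') (dist b b'))
    {A B : Finset S} (hA : A.Nonempty) (hB : B.Nonempty) {r : ℝ}
    (hAB : ∀ a ∈ A, ∃ b ∈ B, dist a b ≤ r) (hBA : ∀ b ∈ B, ∃ a ∈ A, dist a b ≤ r) :
    dist (A.sup' hA id) (B.sup' hB id) ≤ r := by
  classical
  set R := (A ×ˢ B).filter fun p => dist p.1 p.2 ≤ r
  have hfst : R.image Prod.fst = A := by
    ext a
    simp only [R, Finset.mem_image, Finset.mem_filter, Finset.mem_product]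
    refine ⟨fun ⟨p, ⟨⟨ha, _⟩, _⟩, hpa⟩ => hpa ▸ ha, fun ha => ?_⟩
    obtain ⟨b, hb, hab⟩ := hAB a ha
    exact ⟨(a, b), ⟨⟨ha, hb⟩, hab⟩, rfl⟩
  have hsnd : R.image Prod.snd = B := by
    ext b
    simp only [R, Finset.mem_image, Finset.mem_filter, Finset.mem_product]
    refine ⟨fun ⟨p, ⟨⟨_, hb⟩, _⟩, hpb⟩ => hpb ▸ hb, fun hb => ?_⟩
    obtain ⟨a, ha, hab⟩ := hBA b hb
    exact ⟨(a, b), ⟨⟨ha, hb⟩, hab⟩, rfl⟩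
  have hR : R.Nonempty := (hfst ▸ hA).of_image
  have hsupA : A.sup' hA id = R.sup' hR Prod.fst := by
    simp_rw [← hfst, Finset.sup'_image]; rfl
  have hsupB : B.sup' hB id = R.sup' hR Prod.snd := by
    simp_rw [← hsnd, Finset.sup'_image]; rfl
  rw [hsupA, hsupB]
  exact Finset.dist_sup'_sup'_le hd hR fun p hp => (Finset.mem_filter.1 hp).2

end MetricSemilattice

lemma Metric.exists_mem_dist_le_hausdorffDist {X : Type*} [MetricSpace X] {s t : Set X}
    (hs : Bornology.IsBounded s) (ht : IsCompact t) (htne : t.Nonempty) {x : X} (hx : x ∈ s) :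
    ∃ y ∈ t, dist x y ≤ hausdorffDist s t := by
  obtain ⟨y, hy, hxy⟩ := ht.exists_infDist_eq_dist htne x
  refine ⟨y, hy, hxy ▸ infDist_le_hausdorffDist_of_mem hx ?_⟩
  exact hausdorffEDist_ne_top_of_nonempty_of_bounded ⟨x, hx⟩ htne hs ht.isBounded

theorem stmt11 {S : Type*} [MetricSpace S] [SemilatticeSup S]
    (hd : ∀ a b a' b' : S, dist (a ⊔ b) (a' ⊔ b') ≤ max (dist a a') (dist b b')) :
    (∀ (A B : Finset S) (hA : A.Nonempty) (hB : B.Nonempty),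
      dist (A.sup' hA id) (B.sup' hB id) ≤ Metric.hausdorffDist (A : Set S) (B : Set S)) ∧
    ∀ s : S, ({s} : Finset S).sup' (Finset.singleton_nonempty s) id = s := by
  refine ⟨fun A B hA hB => ?_, fun s => Finset.sup'_singleton id⟩
  refine Finset.dist_sup'_id_le_of_forall_exists hd hA hB (fun a ha => ?_) (fun b hb => ?_)
  · exact exists_mem_dist_le_hausdorffDist A.finite_toSet.isBounded
      B.finite_toSet.isCompact (Finset.coe_nonempty.2 hB) (Finset.mem_coe.2 ha)
  · obtain ⟨a, ha, hab⟩ := exists_mem_dist_le_hausdorffDist B.finite_toSet.isBounded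
      A.finite_toSet.isCompact (Finset.coe_nonempty.2 hA) (Finset.mem_coe.2 hb)
    exact ⟨a, ha, by rwa [dist_comm, hausdorffDist_comm]⟩
end

section
/- Let G be a compact topological group acting continuously and linearly on a finite-dimensional normed real vector space L, and let V ⊆ L be a convex G-invariant subset. Then the closure of V contains a G-fixed point v lying in the relative interior of V, and the map H(x,t) = (1−t)x + tv is a G-equivariant homotopy from the identity on the closure of V witnessing that V is G-homotopy dense in its closure (H(x,t) ∈ V for all x in the closure of V and t ∈ (0,1]). -/
/-!
Take `v` to be the Haar average of the orbit of a point `w` of the relative interior of `V`; it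
is `G`-fixed by left invariance. Each `g` acts by a continuous affine automorphism preserving `V`,
hence also its relative interior. Read in the direction of the affine span, the relative interior
is an open convex set containing the compact orbit of `w`, so it contains the closed convex hull
of that orbit, and with it `v`. The homotopy stays in `V` because a segment from a relative
interior point to a point of the closure lies in the relative interior, except possibly for its
far endpoint.
-/

open Set Metric MeasureTheory

section IntrinsicInterior

variable {E : Type*} [NormedAddCommGroup E] [NormedSpace ℝ E] {s : Set E}

theorem intrinsicInterior_eq_image_interior_preimage {p : E} (hp : p ∈ affineSpan ℝ s) :
    intrinsicInterior ℝ s =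
      (fun v : (affineSpan ℝ s).direction => (v : E) + p) ''
        interior ((fun v : (affineSpan ℝ s).direction => (v : E) + p) ⁻¹' s) := by
  have : Nonempty (affineSpan ℝ s) := ⟨⟨p, hp⟩⟩
  let e := (AffineIsometryEquiv.vaddConst ℝ (⟨p, hp⟩ : affineSpan ℝ s)).toHomeomorph
  have he : (fun v : (affineSpan ℝ s).direction => (v : E) + p) = Subtype.val ∘ e := rfl
  rw [he, image_comp, preimage_comp, ← e.preimage_interior, image_preimage_eq _ e.surjective]
  rfl

theorem Convex.preimage_coe_add (hs : Convex ℝ s) (D : Submodule ℝ E) (p : E) :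
    Convex ℝ ((fun v : D => (v : E) + p) ⁻¹' s) := by
  have hpre : (fun v : D => (v : E) + p) ⁻¹' s = D.subtype ⁻¹' ((p + ·) ⁻¹' s) := by
    ext v
    simp [add_comm]
  rw [hpre]
  exact (hs.translate_preimage_right p).linear_preimage D.subtype

theorem IsCompact.closure_convexHull_subset {K U : Set E} (hK : IsCompact K) (hU : IsOpen U)
    (hUc : Convex ℝ U) (hKU : K ⊆ U) : closure (convexHull ℝ K) ⊆ U := by
  obtain ⟨δ, hδ, hKδ⟩ := hK.exists_thickening_subset_open hU hKU
  calc closure (convexHull ℝ K)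
      ⊆ thickening δ (convexHull ℝ K) := closure_subset_thickening hδ _
    _ = convexHull ℝ (thickening δ K) := by
      rw [← add_ball_zero, ← add_ball_zero, convexHull_add, (convex_ball 0 δ).convexHull_eq]
    _ ⊆ U := convexHull_min hKδ hUc

variable [FiniteDimensional ℝ E]

theorem Convex.combo_intrinsicInterior_closure_mem_intrinsicInterior (hs : Convex ℝ s)
    {x y : E} (hx : x ∈ intrinsicInterior ℝ s) (hy : y ∈ closure s) {a b : ℝ} (ha : 0 < a)
    (hb : 0 ≤ b) (hab : a + b = 1) : a • x + b • y ∈ intrinsicInterior ℝ s := by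
  have hspan : closure s ⊆ affineSpan ℝ s :=
    (affineSpan ℝ s).closed_of_finiteDimensional.closure_subset_iff.2 (subset_affineSpan ℝ s)
  have hxA : x ∈ affineSpan ℝ s := hspan (subset_closure (intrinsicInterior_subset hx))
  set D := (affineSpan ℝ s).direction
  set φ : D → E := fun v => (v : E) + x with hφ
  have hφ_isometry : Isometry φ := Isometry.of_dist_eq fun v w => by simp [hφ, dist_eq_norm]
  rw [intrinsicInterior_eq_image_interior_preimage hxA] at hx ⊢
  obtain ⟨u, hu, hux⟩ := hx
  have hu0 : (u : E) = 0 := by simpa [hφ] using hux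
  let y' : D := ⟨y - x, AffineSubspace.vsub_mem_direction (hspan hy) hxA⟩
  have hy' : y' ∈ closure (φ ⁻¹' s) := by
    rw [hφ_isometry.isEmbedding.closure_eq_preimage_closure_image,
      image_preimage_eq_of_subset]
    · simpa [y', hφ] using hy
    · intro z hz
      exact ⟨⟨z - x, AffineSubspace.vsub_mem_direction (subset_affineSpan ℝ s hz) hxA⟩,
        by simp [hφ]⟩
  refine ⟨a • u + b • y',
    (hs.preimage_coe_add D x).combo_interior_closure_mem_interior hu hy' ha hb hab, ?_⟩
  simp only [y', Submodule.coe_add, Submodule.coe_smul, hu0, smul_zero, zero_add]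
  rw [eq_sub_of_add_eq hab]
  module

theorem Convex.integral_mem_intrinsicInterior (hs : Convex ℝ s)
    {α : Type*} [TopologicalSpace α] [CompactSpace α] [MeasurableSpace α] [OpensMeasurableSpace α]
    {μ : Measure α} [IsProbabilityMeasure μ] {f : α → E} (hf : Continuous f)
    (hfs : ∀ a, f a ∈ intrinsicInterior ℝ s) : ∫ a, f a ∂μ ∈ intrinsicInterior ℝ s := by
  obtain ⟨a₀⟩ : Nonempty α := nonempty_of_isProbabilityMeasure μ
  have hA : ∀ a, f a ∈ affineSpan ℝ s := fun a =>
    subset_affineSpan ℝ s (intrinsicInterior_subset (hfs a))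
  set D := (affineSpan ℝ s).direction
  set φ : D → E := fun v => (v : E) + f a₀
  let g : α → D := fun a => ⟨f a - f a₀, AffineSubspace.vsub_mem_direction (hA a) (hA a₀)⟩
  have hg : Continuous g := (hf.sub continuous_const).subtype_mk _
  have hgi : Integrable g μ := hg.integrable_of_hasCompactSupport (.of_compactSpace _)
  rw [intrinsicInterior_eq_image_interior_preimage (hA a₀)] at hfs ⊢
  have hgU : ∀ a, g a ∈ interior (φ ⁻¹' s) := fun a => by
    obtain ⟨u, hu, hua⟩ := hfs a
    convert hu
    ext
    simp [g, ← hua]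
  refine ⟨∫ a, g a ∂μ, ?_, ?_⟩
  · refine (isCompact_range hg).closure_convexHull_subset isOpen_interior
      (hs.preimage_coe_add D _).interior (range_subset_iff.2 hgU) ?_
    exact (convex_convexHull ℝ _).closure.integral_mem isClosed_closure
      (.of_forall fun a => subset_closure (subset_convexHull ℝ _ ⟨a, rfl⟩)) hgi
  · calc ((∫ a, g a ∂μ : D) : E) + f a₀
        = ∫ a, (D.subtypeL (g a) + f a₀) ∂μ := by
          rw [integral_add (D.subtypeL.integrable_comp hgi) (integrable_const _),
            D.subtypeL.integral_comp_comm hgi, integral_const, probReal_univ, one_smul]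
          rfl
      _ = ∫ a, f a ∂μ := by simp [g]

end IntrinsicInterior

section GroupAction

variable {G L : Type*} [Group G] [NormedAddCommGroup L] [NormedSpace ℝ L]
  [DistribMulAction G L] [SMulCommClass G ℝ L] [ContinuousConstSMul G L]

theorem smul_mem_intrinsicInterior {V : Set L} (hinv : ∀ (g : G), ∀ v ∈ V, g • v ∈ V) (g : G)
    {x : L} (hx : x ∈ intrinsicInterior ℝ V) : g • x ∈ intrinsicInterior ℝ V := by
  let φ := (ContinuousLinearEquiv.smulLeft (R₁ := ℝ) (M₁ := L) g).toContinuousAffineEquiv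
  have hφV : φ '' V = V := by
    refine (image_subset_iff.2 fun v hv => hinv g v hv).antisymm fun v hv => ?_
    exact ⟨g⁻¹ • v, hinv g⁻¹ v hv, smul_inv_smul g v⟩
  rw [← hφV, φ.intrinsicInterior_image]
  exact mem_image_of_mem φ hx

theorem smul_integral_smul [MeasurableSpace G] [MeasurableMul G] (μ : Measure G)
    [μ.IsMulLeftInvariant] (w : L) (h : G) : h • ∫ g, g • w ∂μ = ∫ g, g • w ∂μ :=
  calc h • ∫ g, g • w ∂μ = ∫ g, h • g • w ∂μ :=
        ((ContinuousLinearEquiv.smulLeft (R₁ := ℝ) (M₁ := L) h).integral_comp_comm _).symm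
    _ = ∫ g, (h * g) • w ∂μ := by simp only [mul_smul]
    _ = ∫ g, g • w ∂μ := integral_mul_left_eq_self (fun g => g • w) h

end GroupAction

theorem stmt14 {G L : Type*} [Group G] [TopologicalSpace G] [IsTopologicalGroup G]
    [CompactSpace G] [NormedAddCommGroup L] [NormedSpace ℝ L] [FiniteDimensional ℝ L]
    [DistribMulAction G L] [SMulCommClass G ℝ L] [ContinuousSMul G L]
    (V : Set L) (hV : Convex ℝ V) (hne : V.Nonempty)
    (hinv : ∀ (g : G), ∀ v ∈ V, g • v ∈ V) :
    ∃ v ∈ intrinsicInterior ℝ V, (∀ g : G, g • v = v) ∧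
      (Continuous fun p : L × ℝ => (1 - p.2) • p.1 + p.2 • v) ∧
      (∀ x : L, (1 - (0 : ℝ)) • x + (0 : ℝ) • v = x) ∧
      (∀ x ∈ closure V, ∀ t ∈ Set.Ioc (0 : ℝ) 1, (1 - t) • x + t • v ∈ V) ∧
      ∀ (g : G) (x : L) (t : ℝ), (1 - t) • (g • x) + t • v = g • ((1 - t) • x + t • v) := by
  borelize G
  let μ : Measure G := Measure.haarMeasure ⊤
  have : IsProbabilityMeasure μ := ⟨Measure.haarMeasure_self⟩
  obtain ⟨w, hw⟩ := hne.intrinsicInterior hV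
  have hv : ∫ g, g • w ∂μ ∈ intrinsicInterior ℝ V :=
    hV.integral_mem_intrinsicInterior (continuous_id.smul continuous_const)
      fun g => smul_mem_intrinsicInterior hinv g hw
  have hfix := smul_integral_smul μ w
  refine ⟨∫ g, g • w ∂μ, hv, hfix, by fun_prop, by simp, ?_, ?_⟩
  · intro x hx t ⟨ht₀, ht₁⟩
    rw [add_comm]
    exact intrinsicInterior_subset <| hV.combo_intrinsicInterior_closure_mem_intrinsicInterior
      hv hx ht₀ (sub_nonneg.2 ht₁) (by ring)
  · intro g x t
    rw [smul_add, smul_comm g (1 - t), smul_comm g t, hfix]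
end
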